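/- Non-malleability transfers from the BIT function family to arbitrary binary AVCs: if a (k,n)-coding scheme (Enc, Dec) is ε-non-malleable with respect to the family F_BIT = {Keep, Flip, Set0, Set1}ⁿ (i.e., for every f ∈ F_BIT there is a distribution D_f with SD(Tamper_m^f; Copy(D_f, m)) ≤ ε for all m), then for every sequence (W_{s₁},…,W_{sₙ}) of binary channels, letting D_𝐬 = Σ_{f∈F_BIT} (∏_{i∈[n]} Φ_{fᵢ}(W_{sᵢ})) D_f where Φ_{Keep}, Φ_{Flip}, Φ_{Set0}, Φ_{Set1} extract the convex-decomposition coefficients of each W_{sᵢ}, D_𝐬 is a probability distribution independent of m and SD(Tamper_m^{W_𝐬}; Copy(D_𝐬, m)) ≤ ε for all messages m. -/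

import Mathlib

noncomputable def SD {Ω : Type*} [Fintype Ω] (P Q : Ω → ℝ) : ℝ :=
  (1 / 2) * ∑ ω, |P ω - Q ω|

/-- The four bitwise tampering operations Keep, Flip, Set0, Set1. -/
inductive BitOp | keep | flip | set0 | set1
deriving DecidableEq

instance instFintypeBitOp : Fintype BitOp :=
  ⟨{BitOp.keep, BitOp.flip, BitOp.set0, BitOp.set1}, fun x => by cases x <;> simp⟩

def BitOp.apply : BitOp → ZMod 2 → ZMod 2
  | .keep, x => x
  | .flip, x => x + 1
  | .set0, _ => 0
  | .set1, _ => 1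

/-- The elementary (deterministic) channel matrix of a bit operation. -/
def elemChannel (op : BitOp) : Matrix (ZMod 2) (ZMod 2) ℝ :=
  fun x y => if op.apply x = y then 1 else 0

/-- `Copy(D, m)`: `none` encodes `same*`, `some none` encodes `⊥`,
`some (some m')` encodes the message `m'`. -/
noncomputable def copyDist {Msg : Type*} [DecidableEq Msg]
    (D : Option (Option Msg) → ℝ) (m : Msg) : Option Msg → ℝ :=
  fun o => D (some o) + (if o = some m then D none else 0)

/-!
Expanding each channel `W_{sᵢ} = Σ_op α_{i,op} W_op` and multiplying out, the memoryless channel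
`∏ᵢ W_{sᵢ}` is the mixture, with weights `∏ᵢ α_{i,fᵢ}`, of the deterministic bitwise tamperings
`f ∈ F_BIT`. Hence `Tamper_m^{W_𝐬}` is the same mixture of the `Tamper_m^f`, and `Copy(D_𝐬, m)`
is the same mixture of the `Copy(D_f, m)` since `Copy` is linear in `D`. Joint convexity of the
statistical distance bounds the distance of the mixtures by the average of the `ε`-bounds.
-/

open Finset

theorem SD_mixture_le {ι Ω : Type*} [Fintype ι] [Fintype Ω] (w : ι → ℝ) (hw : ∀ i, 0 ≤ w i)
    (P Q : ι → Ω → ℝ) :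
    SD (fun ω => ∑ i, w i * P i ω) (fun ω => ∑ i, w i * Q i ω) ≤ ∑ i, w i * SD (P i) (Q i) := by
  calc SD (fun ω => ∑ i, w i * P i ω) (fun ω => ∑ i, w i * Q i ω)
      = 1 / 2 * ∑ ω, |∑ i, w i * (P i ω - Q i ω)| := by
        simp only [SD, mul_sub, sum_sub_distrib]
    _ ≤ 1 / 2 * ∑ ω, ∑ i, w i * |P i ω - Q i ω| := by
        gcongr with ω
        refine (abs_sum_le_sum_abs _ _).trans_eq (sum_congr rfl fun i _ => ?_)
        rw [abs_mul, abs_of_nonneg (hw i)]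
    _ = ∑ i, w i * SD (P i) (Q i) := by
        simp only [SD, mul_sum]
        rw [sum_comm]
        exact sum_congr rfl fun i _ => sum_congr rfl fun ω _ => by ring

theorem copyDist_mixture {ι Msg : Type*} [Fintype ι] [DecidableEq Msg] (w : ι → ℝ)
    (D : ι → Option (Option Msg) → ℝ) (m : Msg) :
    copyDist (fun s => ∑ i, w i * D i s) m = fun o => ∑ i, w i * copyDist (D i) m o := by
  funext o
  simp only [copyDist, mul_add, sum_add_distrib, mul_ite, mul_zero, sum_ite_irrel, sum_const_zero]

theorem sum_pi_prod_eq_one {ι κ : Type*} [Fintype ι] [DecidableEq ι] [Fintype κ]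
    (α : ι → κ → ℝ) (hα : ∀ i, ∑ j, α i j = 1) :
    ∑ f : ι → κ, ∏ i, α i (f i) = 1 := by
  rw [← Fintype.prod_sum]
  simp [hα]

section Channels

variable {ι : Type*} [Fintype ι]

theorem prod_elemChannel (f : ι → BitOp) (x y : ι → ZMod 2) :
    ∏ i, elemChannel (f i) (x i) (y i) = if (fun i => (f i).apply (x i)) = y then 1 else 0 := by
  simp only [elemChannel, prod_boole, funext_iff, mem_univ, true_implies]

theorem sum_prod_elemChannel_mul [DecidableEq ι] (f : ι → BitOp) (x : ι → ZMod 2)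
    (g : (ι → ZMod 2) → ℝ) :
    ∑ y, (∏ i, elemChannel (f i) (x i) (y i)) * g y = g (fun i => (f i).apply (x i)) := by
  simp only [prod_elemChannel, ite_mul, one_mul, zero_mul, sum_ite_eq, mem_univ, if_true]

theorem prod_channel_eq_mixture [DecidableEq ι] (W : ι → Matrix (ZMod 2) (ZMod 2) ℝ)
    (α : ι → BitOp → ℝ) (hdecomp : ∀ i, W i = ∑ op, α i op • elemChannel op) (x y : ι → ZMod 2) :
    ∏ i, W i (x i) (y i) =
      ∑ f : ι → BitOp, (∏ i, α i (f i)) * ∏ i, elemChannel (f i) (x i) (y i) := by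
  simp only [hdecomp, Matrix.sum_apply, Matrix.smul_apply, smul_eq_mul, Fintype.prod_sum,
    prod_mul_distrib]

theorem sum_prod_channel_mul [DecidableEq ι] (W : ι → Matrix (ZMod 2) (ZMod 2) ℝ)
    (α : ι → BitOp → ℝ) (hdecomp : ∀ i, W i = ∑ op, α i op • elemChannel op) (x : ι → ZMod 2)
    (g : (ι → ZMod 2) → ℝ) :
    ∑ y, (∏ i, W i (x i) (y i)) * g y =
      ∑ f : ι → BitOp, (∏ i, α i (f i)) * g (fun i => (f i).apply (x i)) := by
  simp_rw [prod_channel_eq_mixture W α hdecomp, sum_mul, mul_assoc]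
  rw [sum_comm]
  simp_rw [← mul_sum, sum_prod_elemChannel_mul]

end Channels

theorem stmt_13_general (k n : ℕ) (ε : ℝ)
    (R : Type) [Fintype R] (μ : R → ℝ)
    (Enc : (Fin k → ZMod 2) → R → (Fin n → ZMod 2))
    (Dec : (Fin n → ZMod 2) → Option (Fin k → ZMod 2))
    -- the channel sequence and its convex decomposition into elementary channels
    (W : Fin n → Matrix (ZMod 2) (ZMod 2) ℝ)
    (α : Fin n → BitOp → ℝ)
    (hαnonneg : ∀ i op, 0 ≤ α i op)
    (hαsum : ∀ i, ∑ op, α i op = 1)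
    (hdecomp : ∀ i, W i = ∑ op, α i op • elemChannel op)
    -- `ε`-non-malleability w.r.t. the BIT family, with simulators `D_f`
    (Df : (Fin n → BitOp) → Option (Option (Fin k → ZMod 2)) → ℝ)
    (hDf : ∀ f : Fin n → BitOp,
      (∀ s, 0 ≤ Df f s) ∧ (∑ s, Df f s = 1) ∧
      ∀ m : Fin k → ZMod 2,
        SD (fun o => ∑ r, μ r *
              (if Dec (fun i => (f i).apply (Enc m r i)) = o then 1 else 0))
           (copyDist (Df f) m) ≤ ε) :
    -- conclusion: the mixture simulator works for the AVC tampering experiment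
    let Ds : Option (Option (Fin k → ZMod 2)) → ℝ :=
      fun s => ∑ f : Fin n → BitOp, (∏ i, α i (f i)) * Df f s
    let TamperW : (Fin k → ZMod 2) → Option (Fin k → ZMod 2) → ℝ :=
      fun m o => ∑ r, μ r * ∑ y : Fin n → ZMod 2,
        (∏ i, W i (Enc m r i) (y i)) * (if Dec y = o then 1 else 0)
    (∀ s, 0 ≤ Ds s) ∧ (∑ s, Ds s = 1) ∧
    ∀ m : Fin k → ZMod 2, SD (TamperW m) (copyDist Ds m) ≤ ε := by
  intro Ds TamperW
  set w : (Fin n → BitOp) → ℝ := fun f => ∏ i, α i (f i)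
  have hw_nonneg : ∀ f, 0 ≤ w f := fun f => prod_nonneg fun i _ => hαnonneg i (f i)
  have hw_sum : ∑ f, w f = 1 := sum_pi_prod_eq_one α hαsum
  have hTamper : ∀ m, TamperW m = fun o => ∑ f, w f *
      ∑ r, μ r * (if Dec (fun i => (f i).apply (Enc m r i)) = o then 1 else 0) := by
    intro m
    funext o
    simp only [TamperW, sum_prod_channel_mul W α hdecomp, mul_sum]
    rw [sum_comm]
    exact sum_congr rfl fun f _ => sum_congr rfl fun r _ => by ring
  refine ⟨fun s => sum_nonneg fun f _ => mul_nonneg (hw_nonneg f) ((hDf f).1 s), ?_, fun m => ?_⟩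
  · simp only [Ds, sum_comm (s := univ) (t := univ), ← mul_sum, (hDf _).2.1, mul_one]
    exact hw_sum
  · calc SD (TamperW m) (copyDist Ds m)
        ≤ ∑ f, w f * SD _ (copyDist (Df f) m) := by
          rw [hTamper, copyDist_mixture]
          exact SD_mixture_le w hw_nonneg _ _
      _ ≤ ∑ f, w f * ε :=
          sum_le_sum fun f _ => mul_le_mul_of_nonneg_left ((hDf f).2.2 m) (hw_nonneg f)
      _ = ε := by rw [← sum_mul, hw_sum, one_mul]

/-- Non-malleability transfers from the BIT family to arbitrary binary AVCs:
if `(Enc, Dec)` is `ε`-non-malleable w.r.t. `F_BIT`, then for any sequence of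
binary channels `W_𝐬`, decomposed coordinatewise into the elementary channels
with coefficients `α`, the mixture `D_𝐬 = Σ_f (∏ᵢ α_{i,fᵢ}) D_f` is a
probability distribution (independent of `m`) with
`SD(Tamper_m^{W_𝐬}; Copy(D_𝐬, m)) ≤ ε` for every message `m`. -/
theorem stmt_13 (k n : ℕ) (ε : ℝ)
    (R : Type) [Fintype R] (μ : R → ℝ)
    (hμ : (∀ r, 0 ≤ μ r) ∧ ∑ r, μ r = 1)
    (Enc : (Fin k → ZMod 2) → R → (Fin n → ZMod 2))
    (Dec : (Fin n → ZMod 2) → Option (Fin k → ZMod 2))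
    -- the channel sequence and its convex decomposition into elementary channels
    (W : Fin n → Matrix (ZMod 2) (ZMod 2) ℝ)
    (α : Fin n → BitOp → ℝ)
    (hαnonneg : ∀ i op, 0 ≤ α i op)
    (hαsum : ∀ i, ∑ op, α i op = 1)
    (hdecomp : ∀ i, W i = ∑ op, α i op • elemChannel op)
    -- `ε`-non-malleability w.r.t. the BIT family, with simulators `D_f`
    (Df : (Fin n → BitOp) → Option (Option (Fin k → ZMod 2)) → ℝ)
    (hDf : ∀ f : Fin n → BitOp,
      (∀ s, 0 ≤ Df f s) ∧ (∑ s, Df f s = 1) ∧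
      ∀ m : Fin k → ZMod 2,
        SD (fun o => ∑ r, μ r *
              (if Dec (fun i => (f i).apply (Enc m r i)) = o then 1 else 0))
           (copyDist (Df f) m) ≤ ε) :
    -- conclusion: the mixture simulator works for the AVC tampering experiment
    let Ds : Option (Option (Fin k → ZMod 2)) → ℝ :=
      fun s => ∑ f : Fin n → BitOp, (∏ i, α i (f i)) * Df f s
    let TamperW : (Fin k → ZMod 2) → Option (Fin k → ZMod 2) → ℝ :=
      fun m o => ∑ r, μ r * ∑ y : Fin n → ZMod 2,
        (∏ i, W i (Enc m r i) (y i)) * (if Dec y = o then 1 else 0)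
    (∀ s, 0 ≤ Ds s) ∧ (∑ s, Ds s = 1) ∧
    ∀ m : Fin k → ZMod 2, SD (TamperW m) (copyDist Ds m) ≤ ε :=
  stmt_13_general k n ε R μ Enc Dec W α hαnonneg hαsum hdecomp Df hDf
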